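/- For φ ∈ (0, 2π) and z = a - ik ∈ ℂ, the limit as t → 0⁺ of tr(T_z R_φ e^{-tH}) on L²(ℝ) equals (1 − e^{-iφ})^{-1} · exp((i/4)(a² + k²)·cot(φ/2)). -/

import Mathlib

open Complex Filter

/-- Mehler's heat kernel `e^{-TH}(x,y) = (2π sinh T)^{-1/2} exp(−coth T·(x²+y²)/2 + xy/sinh T)`
for the harmonic oscillator `H = (1/2)(x² - d²/dx²)`, analytically continued to complex time
`T = t + iφ`; the branch of `(2π sinh T)^{-1/2}` is the analytic continuation from `T > 0`,
realized as `(2π sinh(T/2))^{-1/2}·(2 cosh(T/2))^{-1/2}` with principal powers. -/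
noncomputable def mehlerKernelC (T : ℂ) (x y : ℝ) : ℂ :=
  (2 * Real.pi * Complex.sinh (T / 2)) ^ (-(1 / 2) : ℂ) *
    (2 * Complex.cosh (T / 2)) ^ (-(1 / 2) : ℂ) *
    Complex.exp (-(Complex.cosh T / Complex.sinh T) * (((x : ℂ) ^ 2 + (y : ℂ) ^ 2) / 2)
      + (x : ℂ) * y / Complex.sinh T)

/-!
For `Re T > 0` the diagonal of the kernel of `T_z e^{-TH}` is a Gaussian in `x`. Writing
`s = sinh (T/2)`, `c = cosh (T/2)`, so that `sinh T = 2sc` and `cosh T = c² + s²`, its quadratic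
coefficient is `-s/c`, and `Re (s/c) > 0` when `0 < Im T < 2π`; the Gaussian integral then
collapses the principal-branch prefactors to `(2s)⁻¹` and the exponent to `-(a²+k²)c/(4s)`.
This closed form is continuous up to `T = iφ`, where `sinh (iφ/2) = i sin (φ/2) ≠ 0`,
`e^{iφ/2} / (2 sinh (iφ/2)) = (1 - e^{-iφ})⁻¹` and `coth (iφ/2) = -i cot (φ/2)`.
-/

namespace Complex

lemma sinh_ofReal_add_ofReal_mul_I (x y : ℝ) :
    sinh (x + y * I) = (Real.sinh x * Real.cos y : ℝ) + (Real.cosh x * Real.sin y : ℝ) * I := by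
  rw [sinh_add, sinh_mul_I, cosh_mul_I, ← ofReal_sinh, ← ofReal_cosh, ← ofReal_sin, ← ofReal_cos]
  push_cast
  ring

lemma cosh_ofReal_add_ofReal_mul_I (x y : ℝ) :
    cosh (x + y * I) = (Real.cosh x * Real.cos y : ℝ) + (Real.sinh x * Real.sin y : ℝ) * I := by
  rw [cosh_add, sinh_mul_I, cosh_mul_I, ← ofReal_sinh, ← ofReal_cosh, ← ofReal_sin, ← ofReal_cos]
  push_cast
  ring

lemma sinh_ofReal_add_ofReal_mul_I_re (x y : ℝ) :
    (sinh (x + y * I)).re = Real.sinh x * Real.cos y := by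
  rw [sinh_ofReal_add_ofReal_mul_I]; simp only [add_re, mul_re, ofReal_re, ofReal_im, I_re, I_im]; ring

lemma sinh_ofReal_add_ofReal_mul_I_im (x y : ℝ) :
    (sinh (x + y * I)).im = Real.cosh x * Real.sin y := by
  rw [sinh_ofReal_add_ofReal_mul_I]; simp only [add_im, mul_im, ofReal_re, ofReal_im, I_re, I_im]; ring

lemma cosh_ofReal_add_ofReal_mul_I_re (x y : ℝ) :
    (cosh (x + y * I)).re = Real.cosh x * Real.cos y := by
  rw [cosh_ofReal_add_ofReal_mul_I]; simp only [add_re, mul_re, ofReal_re, ofReal_im, I_re, I_im]; ring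

lemma cosh_ofReal_add_ofReal_mul_I_im (x y : ℝ) :
    (cosh (x + y * I)).im = Real.sinh x * Real.sin y := by
  rw [cosh_ofReal_add_ofReal_mul_I]; simp only [add_im, mul_im, ofReal_re, ofReal_im, I_re, I_im]; ring

lemma cosh_ofReal_add_ofReal_mul_I_ne_zero {x : ℝ} (hx : x ≠ 0) (y : ℝ) :
    cosh (x + y * I) ≠ 0 := by
  intro h
  have hcos : Real.cos y = 0 := by
    simpa [h, (Real.cosh_pos x).ne'] using (cosh_ofReal_add_ofReal_mul_I_re x y).symm
  have hsin : Real.sin y = 0 := by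
    simpa [h, Real.sinh_ne_zero.2 hx] using (cosh_ofReal_add_ofReal_mul_I_im x y).symm
  simpa [hcos, hsin] using Real.sin_sq_add_cos_sq y

lemma re_sinh_div_cosh_ofReal_add_ofReal_mul_I_pos {x : ℝ} (hx : 0 < x) (y : ℝ) :
    0 < (sinh (x + y * I) / cosh (x + y * I)).re := by
  rw [div_re, ← add_div, sinh_ofReal_add_ofReal_mul_I_re, sinh_ofReal_add_ofReal_mul_I_im,
    cosh_ofReal_add_ofReal_mul_I_re, cosh_ofReal_add_ofReal_mul_I_im]
  refine div_pos ?_ (normSq_pos.2 (cosh_ofReal_add_ofReal_mul_I_ne_zero hx.ne' y))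
  nlinarith [mul_pos (Real.sinh_pos_iff.2 hx) (Real.cosh_pos x), Real.sin_sq_add_cos_sq y]

lemma log_div_of_im_pos {z w : ℂ} (hz : 0 < z.im) (hw : 0 < w.im) :
    log (z / w) = log z - log w := by
  have hz₀ : z ≠ 0 := fun h => by simp [h] at hz
  have hw₀ : w ≠ 0 := fun h => by simp [h] at hw
  have hargz := arg_nonneg_iff.2 hz.le
  have hargz' := arg_lt_pi_iff.2 (Or.inr hz.ne')
  have hargw := arg_nonneg_iff.2 hw.le
  have hargw' := arg_lt_pi_iff.2 (Or.inr hw.ne')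
  rw [div_eq_mul_inv, log_mul hz₀ (inv_ne_zero hw₀), log_inv w hargw'.ne, sub_eq_add_neg]
  rw [arg_inv, if_neg hargw'.ne]
  constructor <;> linarith

end Complex

lemma mehler_prefactor_mul_gaussian_factor {s c : ℂ} (hs : 0 < s.im) (hc : 0 < c.im) :
    (2 * (Real.pi : ℂ) * s) ^ (-(1 / 2) : ℂ) * (2 * c) ^ (-(1 / 2) : ℂ) *
      ((Real.pi : ℂ) / (s / c)) ^ (1 / 2 : ℂ) = (2 * s)⁻¹ := by
  have hs₀ : s ≠ 0 := fun h => by simp [h] at hs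
  have hc₀ : c ≠ 0 := fun h => by simp [h] at hc
  have hπ := Real.pi_pos
  have hlog_s : log (2 * (Real.pi : ℂ) * s) = Real.log (2 * Real.pi) + log s := by
    rw [← log_ofReal_mul (by positivity) hs₀]; push_cast; ring
  have hlog_c : log (2 * c) = Real.log 2 + log c := by
    rw [← log_ofReal_mul two_pos hc₀]; push_cast; ring
  have hlog_div : log ((Real.pi : ℂ) / (s / c)) = Real.log Real.pi + (log c - log s) := by
    rw [← log_div_of_im_pos hc hs, ← log_ofReal_mul hπ (div_ne_zero hc₀ hs₀), div_div_eq_mul_div,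
      mul_div_assoc]
  have hlog_two_s : log (2 * s) = Real.log 2 + log s := by
    rw [← log_ofReal_mul two_pos hs₀]; push_cast; ring
  rw [cpow_def_of_ne_zero (by simp [hs₀, hπ.ne']), cpow_def_of_ne_zero (by simp [hc₀]),
    cpow_def_of_ne_zero (by simp [hs₀, hc₀, hπ.ne']), ← exp_add, ← exp_add,
    ← exp_log (mul_ne_zero two_ne_zero hs₀), ← exp_neg, hlog_s, hlog_c, hlog_div, hlog_two_s,
    Real.log_mul two_ne_zero hπ.ne']
  push_cast
  congr 1
  ring

/-- Closed form of `tr(T_z e^{-TH})` for `z = a - ik`. -/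
noncomputable def mehlerTraceTz (a k : ℝ) (T : ℂ) : ℂ :=
  (2 * sinh (T / 2))⁻¹ * cexp (-((a : ℂ) ^ 2 + (k : ℂ) ^ 2) * cosh (T / 2) / (4 * sinh (T / 2)))

section MehlerExponent

variable (a k x : ℝ) {s c : ℂ}

lemma twisted_mehler_exponent_eq_quadratic (hs : s ≠ 0) (hc : c ≠ 0) (hcs : c ^ 2 - s ^ 2 = 1) :
    I * (k * x - a * k / 2) + (-((c ^ 2 + s ^ 2) / (2 * s * c)) *
        ((((x - a : ℝ) : ℂ) ^ 2 + (x : ℂ) ^ 2) / 2) + ((x - a : ℝ) : ℂ) * x / (2 * s * c))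
      = -(s / c) * x ^ 2 + (a * s / c + I * k) * x
        + (-(c ^ 2 + s ^ 2) * a ^ 2 / (4 * s * c) - I * a * k / 2) := by
  push_cast
  field_simp
  linear_combination (8 * (x : ℂ) * a - 8 * (x : ℂ) ^ 2) * hcs

lemma twisted_mehler_completed_square (hs : s ≠ 0) (hc : c ≠ 0) :
    (-(c ^ 2 + s ^ 2) * a ^ 2 / (4 * s * c) - I * a * k / 2)
        - (a * s / c + I * k) ^ 2 / (4 * -(s / c))
      = -((a : ℂ) ^ 2 + (k : ℂ) ^ 2) * c / (4 * s) := by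
  field_simp
  linear_combination 2 * (k : ℂ) ^ 2 * c ^ 2 * I_sq

end MehlerExponent

theorem integral_twist_mul_mehlerKernelC (a k : ℝ) {T : ℂ} (hre : 0 < T.re) (him : 0 < T.im)
    (him' : T.im < 2 * Real.pi) :
    ∫ x : ℝ, cexp (I * ((k : ℂ) * x - a * k / 2)) * mehlerKernelC T (x - a) x
      = mehlerTraceTz a k T := by
  have hT : T / 2 = ((T.re / 2 : ℝ) : ℂ) + ((T.im / 2 : ℝ) : ℂ) * I := by
    conv_lhs => rw [← re_add_im T]
    push_cast; ring
  have hsin : 0 < Real.sin (T.im / 2) := Real.sin_pos_of_pos_of_lt_pi (by linarith) (by linarith)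
  set s := sinh (T / 2) with hs_def
  set c := cosh (T / 2) with hc_def
  have hs : 0 < s.im := by
    rw [hs_def, hT, sinh_ofReal_add_ofReal_mul_I_im]; exact mul_pos (Real.cosh_pos _) hsin
  have hc : 0 < c.im := by
    rw [hc_def, hT, cosh_ofReal_add_ofReal_mul_I_im]
    exact mul_pos (Real.sinh_pos_iff.2 (by linarith)) hsin
  have htanh : 0 < (s / c).re := by
    rw [hs_def, hc_def, hT]; exact re_sinh_div_cosh_ofReal_add_ofReal_mul_I_pos (by linarith) _
  have hs₀ : s ≠ 0 := fun h => by simp [h] at hs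
  have hc₀ : c ≠ 0 := fun h => by simp [h] at hc
  have hsinhT : sinh T = 2 * s * c := by rw [← sinh_two_mul, mul_div_cancel₀ _ two_ne_zero]
  have hcoshT : cosh T = c ^ 2 + s ^ 2 := by rw [← cosh_two_mul, mul_div_cancel₀ _ two_ne_zero]
  have hintegrand (x : ℝ) : cexp (I * ((k : ℂ) * x - a * k / 2)) * mehlerKernelC T (x - a) x
      = ((2 * (Real.pi : ℂ) * s) ^ (-(1 / 2) : ℂ) * (2 * c) ^ (-(1 / 2) : ℂ)) *
        cexp (-(s / c) * x ^ 2 + (a * s / c + I * k) * x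
          + (-(c ^ 2 + s ^ 2) * a ^ 2 / (4 * s * c) - I * a * k / 2)) := by
    rw [mehlerKernelC, ← hs_def, ← hc_def, hsinhT, hcoshT,
      ← twisted_mehler_exponent_eq_quadratic a k x hs₀ hc₀ (cosh_sq_sub_sinh_sq _), exp_add (I * _)]
    ring
  simp_rw [hintegrand]
  rw [MeasureTheory.integral_const_mul, integral_cexp_quadratic (by simpa using htanh), neg_neg,
    twisted_mehler_completed_square a k hs₀ hc₀, ← mul_assoc,
    mehler_prefactor_mul_gaussian_factor hs hc, mehlerTraceTz, mul_div_assoc]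

lemma continuousAt_mehlerTraceTz (a k : ℝ) {T : ℂ} (hT : sinh (T / 2) ≠ 0) :
    ContinuousAt (mehlerTraceTz a k) T := by
  have hsinh : ContinuousAt (fun T : ℂ => sinh (T / 2)) T := by fun_prop
  have hcosh : ContinuousAt (fun T : ℂ => cosh (T / 2)) T := by fun_prop
  exact ((continuousAt_const.mul hsinh).inv₀ (by simpa using hT)).mul
    (((continuousAt_const.mul hcosh).div (continuousAt_const.mul hsinh) (by simpa using hT)).cexp)

lemma exp_mul_inv_two_sinh (w : ℂ) : cexp w * (2 * sinh w)⁻¹ = (1 - cexp (-(2 * w)))⁻¹ := by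
  have h : 1 - cexp (-(2 * w)) = 2 * sinh w * cexp (-w) := by
    have hw := exp_add w (-w)
    rw [add_neg_cancel, exp_zero] at hw
    rw [sinh, two_mul, neg_add, exp_add]
    linear_combination hw
  rw [h, mul_inv (2 * sinh w), ← exp_neg, neg_neg, mul_comm]

lemma exp_mul_mehlerTraceTz_I_mul (a k φ : ℝ) :
    cexp (I * φ / 2) * mehlerTraceTz a k (I * φ)
      = (1 - cexp (-I * φ))⁻¹ * cexp ((I / 4) * ((a : ℂ) ^ 2 + (k : ℂ) ^ 2) *
          ((Real.cos (φ / 2) / Real.sin (φ / 2) : ℝ) : ℂ)) := by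
  have hφ : I * φ / 2 = ((φ / 2 : ℝ) : ℂ) * I := by push_cast; ring
  rw [mehlerTraceTz, ← mul_assoc, exp_mul_inv_two_sinh, hφ, sinh_mul_I, cosh_mul_I]
  congr 2
  · push_cast; ring_nf
  · simp only [div_eq_mul_inv, mul_inv, inv_I]
    push_cast
    ring

/-- `R_φ e^{-tH} = e^{iφ/2} e^{-(t+iφ)H}`, and `tr (T_z K) = ∫ e^{i(kx - ak/2)} K(x - a, x) dx`. -/
theorem heatTraceTzRphi_limit (a k φ : ℝ) (hφ : φ ∈ Set.Ioo 0 (2 * Real.pi)) :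
    Tendsto
      (fun t : ℝ => Complex.exp (I * φ / 2) *
        ∫ x : ℝ, Complex.exp (I * ((k : ℂ) * x - a * k / 2)) *
          mehlerKernelC ((t : ℂ) + I * φ) (x - a) x)
      (nhdsWithin 0 (Set.Ioi 0))
      (nhds ((1 - Complex.exp (-I * φ))⁻¹ *
        Complex.exp ((I / 4) * ((a : ℂ) ^ 2 + (k : ℂ) ^ 2) *
          ((Real.cos (φ / 2) / Real.sin (φ / 2) : ℝ) : ℂ)))) := by
  obtain ⟨hφ₀, hφ₂π⟩ := hφ
  have hsinh : sinh (I * φ / 2) ≠ 0 := by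
    rw [show I * φ / 2 = ((φ / 2 : ℝ) : ℂ) * I by push_cast; ring, sinh_mul_I, ← ofReal_sin]
    exact mul_ne_zero (ofReal_ne_zero.2
      (Real.sin_pos_of_pos_of_lt_pi (by linarith) (by linarith)).ne') I_ne_zero
  have hcont : ContinuousAt (fun t : ℝ => cexp (I * φ / 2) * mehlerTraceTz a k (t + I * φ)) 0 :=
    ((continuousAt_mehlerTraceTz a k hsinh).comp_of_eq (by fun_prop)
      (by simp)).const_mul _
  have hlim := hcont.tendsto.mono_left (nhdsWithin_le_nhds (s := Set.Ioi 0))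
  simp only [ofReal_zero, zero_add, exp_mul_mehlerTraceTz_I_mul] at hlim
  refine hlim.congr' ?_
  filter_upwards [self_mem_nhdsWithin] with t (ht : 0 < t)
  rw [integral_twist_mul_mehlerKernelC a k (by simpa using ht) (by simpa using hφ₀)
    (by simpa using hφ₂π)]
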